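/- arXiv:2008.09490 — 7 statements merged into one kernel-verified Lean document; each statement's English description precedes it below -/
import Mathlib

section
/- Let the correlation sets all have size at most 2 and let K be a cover for C. Fix i ∈ {1,...,k} and b ∈ {0,1}, and for each j such that (i,j,b) is a dichotomy and {i,j} ∈ C define X^{i,j}_b = μ_i^{s₂} − μ_i^{s₁} where (s₁,s₂) is any (i,j,b)-pair (so s₁(j)=0 and s₂(j)=1); set X^{i,j}_b = 0 when {i,j} ∉ C. Then for every state s ∈ S with s(i) = b and every state s'' ∈ K with s''(i) = b, one has μ_i^s = μ_i^{s''} + Σ_{j=1}^k X^{i,j}_b · [1(s(j)=1)·1(s''(j)=0) − 1(s(j)=0)·1(s''(j)=1)]. -/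
/-!
Every correlation set containing `i` has the form `{i, j}` for a unique `j` (with `{i, i} = {i}`),
so `μ_i^s` splits into contributions of the sets `{i, j}`, and the contribution of `{i, j}`
depends only on `s i` and `s j`. For two states with `s i = s'' i = b` the `j`-th contributions
therefore differ only when `s j ≠ s'' j`, and then by `±` the difference along an `(i, j, b)`-pair;
the cover provides such a pair, and since a pair only changes coordinate `j`, the difference of
mean losses along it is exactly that `j`-th contribution, i.e. `X j`.
-/

open scoped BigOperators

/-- A state: a Boolean assignment to the `k` fairness criteria whose set of fixed
criteria is an independent set of the incompatibility graph `G`. -/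
def ValidState {k : ℕ} (G : SimpleGraph (Fin k)) (s : Fin k → Bool) : Prop :=
  ∀ i j : Fin k, s i = true → s j = true → ¬ G.Adj i j

/-- A parameter assignment: nonnegative parameters `θ j s` such that `θ j s = θ j s'`
whenever the states `s` and `s'` agree on all coordinates of the correlation set `C j`. -/
def ParamAssignment {k n : ℕ} (G : SimpleGraph (Fin k)) (Cset : Fin n → Finset (Fin k))
    (θ : Fin n → (Fin k → Bool) → ℝ) : Prop :=
  (∀ (j : Fin n) (s : Fin k → Bool), ValidState G s → 0 ≤ θ j s) ∧
  (∀ (j : Fin n) (s s' : Fin k → Bool), ValidState G s → ValidState G s' →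
    (∀ l ∈ Cset j, s l = s' l) → θ j s = θ j s')

/-- The mean loss of criterion `i` at state `s`: `μ_i^s = ∑_j θ_j^s · 1(i ∈ C_j)`. -/
def meanLoss {k n : ℕ} (Cset : Fin n → Finset (Fin k))
    (θ : Fin n → (Fin k → Bool) → ℝ) (i : Fin k) (s : Fin k → Bool) : ℝ :=
  ∑ j : Fin n, if i ∈ Cset j then θ j s else 0

/-- An `(i,j,b)`-pair: valid states `(s, s')` agreeing on all coordinates other than `j`,
with `s i = s' i = b`, `s j = 0` and `s' j = 1`. -/
def IsPair {k : ℕ} (G : SimpleGraph (Fin k)) (i j : Fin k) (b : Bool)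
    (s s' : Fin k → Bool) : Prop :=
  ValidState G s ∧ ValidState G s' ∧ (∀ l : Fin k, l ≠ j → s l = s' l) ∧
    s i = b ∧ s' i = b ∧ s j = false ∧ s' j = true

/-- `(i,j,b)` is a dichotomy: there exist valid states `s, s'` with `s j = 0`, `s' j = 1`
and `s i = s' i = b`. -/
def IsDichotomy {k : ℕ} (G : SimpleGraph (Fin k)) (i j : Fin k) (b : Bool) : Prop :=
  ∃ s s' : Fin k → Bool, ValidState G s ∧ ValidState G s' ∧
    s j = false ∧ s' j = true ∧ s i = b ∧ s' i = b

/-- A cover `K` of `C` (for correlation sets of size at most 2): a set of valid states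
containing an `(i,j,b)`-pair for every correlation set `{i,j} ∈ C` and valid dichotomy
`(i,j,b)`, and for every singleton `{i} ∈ C` two states differing exactly in coordinate `i`. -/
def IsCover {k n : ℕ} (G : SimpleGraph (Fin k)) (Cset : Fin n → Finset (Fin k))
    (K : Set (Fin k → Bool)) : Prop :=
  (∀ s ∈ K, ValidState G s) ∧
  (∀ i j : Fin k, i ≠ j → (∃ l : Fin n, Cset l = {i, j}) → ∀ b : Bool,
    IsDichotomy G i j b → ∃ s s', s ∈ K ∧ s' ∈ K ∧ IsPair G i j b s s') ∧
  (∀ i : Fin k, (∃ l : Fin n, Cset l = {i}) →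
    ∃ s s', s ∈ K ∧ s' ∈ K ∧ ValidState G s ∧ ValidState G s' ∧
      s i = false ∧ s' i = true ∧ ∀ l : Fin k, l ≠ i → s l = s' l)

open Finset

theorem Finset.exists_eq_pair_of_mem {α : Type*} [DecidableEq α] {A : Finset α} {i : α}
    (hA : #A ≤ 2) (hi : i ∈ A) : ∃ j, A = {i, j} := by
  rw [← insert_erase hi]
  rcases (A.erase i).eq_empty_or_nonempty with h | ⟨j, hj⟩
  · exact ⟨i, by simp [h]⟩
  · have : #(A.erase i) ≤ 1 := by rw [card_erase_of_mem hi]; omega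
    have hj' : A.erase i = {j} :=
      eq_singleton_iff_unique_mem.2 ⟨hj, fun x hx => card_le_one.1 this x hx j hj⟩
    exact ⟨j, by rw [hj']⟩

theorem Finset.pair_left_cancel {α : Type*} [DecidableEq α] {i j j' : α}
    (h : ({i, j} : Finset α) = {i, j'}) : j = j' := by
  have h1 : j ∈ ({i, j'} : Finset α) := h ▸ by simp
  have h2 : j' ∈ ({i, j} : Finset α) := h ▸ by simp
  simp only [mem_insert, mem_singleton] at h1 h2
  grind

theorem Finset.sum_ite_eq_pair {α M : Type*} [DecidableEq α] [Fintype α] [AddCommMonoid M]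
    {A : Finset α} (hA : #A ≤ 2) (i : α) (c : M) :
    ∑ j, (if A = {i, j} then c else 0) = if i ∈ A then c else 0 := by
  split_ifs with hi
  · obtain ⟨j₀, rfl⟩ := exists_eq_pair_of_mem hA hi
    have hpair : ∀ j, ({i, j₀} : Finset α) = {i, j} ↔ j₀ = j :=
      fun j => ⟨pair_left_cancel, by rintro rfl; rfl⟩
    simp [hpair]
  · exact sum_eq_zero fun j _ => if_neg fun (h : A = {i, j}) => hi (by simp [h])

section
variable {k n : ℕ} {G : SimpleGraph (Fin k)} {Cset : Fin n → Finset (Fin k)}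
  {θ : Fin n → (Fin k → Bool) → ℝ}

def pairLoss (Cset : Fin n → Finset (Fin k)) (θ : Fin n → (Fin k → Bool) → ℝ)
    (i j : Fin k) (s : Fin k → Bool) : ℝ :=
  ∑ l, if Cset l = {i, j} then θ l s else 0

theorem ParamAssignment.pairLoss_congr (hθ : ParamAssignment G Cset θ) {i j : Fin k}
    {s s' : Fin k → Bool} (hs : ValidState G s) (hs' : ValidState G s') (hi : s i = s' i)
    (hj : s j = s' j) : pairLoss Cset θ i j s = pairLoss Cset θ i j s' := by
  refine sum_congr rfl fun l _ => ?_
  split_ifs with hl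
  · exact hθ.2 l s s' hs hs' (by simp [hl, hi, hj])
  · rfl

theorem pairLoss_eq_zero {i j : Fin k} (hC : ¬ ∃ l, Cset l = {i, j}) (s : Fin k → Bool) :
    pairLoss Cset θ i j s = 0 :=
  sum_eq_zero fun l _ => if_neg fun hl => hC ⟨l, hl⟩

theorem meanLoss_eq_sum_pairLoss (hsize : ∀ l, #(Cset l) ≤ 2) (i : Fin k) (s : Fin k → Bool) :
    meanLoss Cset θ i s = ∑ j, pairLoss Cset θ i j s := by
  simp only [meanLoss, pairLoss]
  rw [sum_comm]
  exact sum_congr rfl fun l _ => (sum_ite_eq_pair (hsize l) i (θ l s)).symm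

theorem meanLoss_sub_of_isPair (hsize : ∀ l, #(Cset l) ≤ 2) (hθ : ParamAssignment G Cset θ)
    {i j : Fin k} {b : Bool} {p₁ p₂ : Fin k → Bool} (hp : IsPair G i j b p₁ p₂) :
    meanLoss Cset θ i p₂ - meanLoss Cset θ i p₁ =
      pairLoss Cset θ i j p₂ - pairLoss Cset θ i j p₁ := by
  obtain ⟨hv₁, hv₂, hagree, hi₁, hi₂, -, -⟩ := hp
  rw [meanLoss_eq_sum_pairLoss hsize, meanLoss_eq_sum_pairLoss hsize, ← sum_sub_distrib]
  refine sum_eq_single j (fun j' _ hj' => ?_) (by simp)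
  rw [hθ.pairLoss_congr hv₂ hv₁ (hi₂.trans hi₁.symm) (hagree j' hj').symm, sub_self]

section
variable {K : Set (Fin k → Bool)} {i : Fin k} {b : Bool} {X : Fin k → ℝ}

theorem eq_pairLoss_sub_of_cover (hsize : ∀ l, #(Cset l) ≤ 2) (hθ : ParamAssignment G Cset θ)
    (hK : IsCover G Cset K)
    (hX : ∀ (j : Fin k) (s₁ s₂ : Fin k → Bool), (∃ l : Fin n, Cset l = {i, j}) →
      IsPair G i j b s₁ s₂ → X j = meanLoss Cset θ i s₂ - meanLoss Cset θ i s₁)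
    {j : Fin k} (hC : ∃ l, Cset l = {i, j}) {t₀ t₁ : Fin k → Bool}
    (ht₀ : ValidState G t₀) (ht₁ : ValidState G t₁) (h₀i : t₀ i = b) (h₁i : t₁ i = b)
    (h₀j : t₀ j = false) (h₁j : t₁ j = true) :
    X j = pairLoss Cset θ i j t₁ - pairLoss Cset θ i j t₀ := by
  have hij : i ≠ j := by
    rintro rfl
    simp_all
  obtain ⟨p₁, p₂, -, -, hp⟩ := hK.2.1 i j hij hC b ⟨t₀, t₁, ht₀, ht₁, h₀j, h₁j, h₀i, h₁i⟩
  have ⟨hv₁, hv₂, _, hi₁, hi₂, hj₁, hj₂⟩ := hp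
  rw [hX j p₁ p₂ hC hp, meanLoss_sub_of_isPair hsize hθ hp,
    hθ.pairLoss_congr hv₂ ht₁ (hi₂.trans h₁i.symm) (hj₂.trans h₁j.symm),
    hθ.pairLoss_congr hv₁ ht₀ (hi₁.trans h₀i.symm) (hj₁.trans h₀j.symm)]

theorem mul_indicator_sub_eq_pairLoss_sub (hsize : ∀ l, #(Cset l) ≤ 2)
    (hθ : ParamAssignment G Cset θ) (hK : IsCover G Cset K)
    (hX : ∀ (j : Fin k) (s₁ s₂ : Fin k → Bool), (∃ l : Fin n, Cset l = {i, j}) →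
      IsPair G i j b s₁ s₂ → X j = meanLoss Cset θ i s₂ - meanLoss Cset θ i s₁)
    (hX0 : ∀ j : Fin k, (¬ ∃ l : Fin n, Cset l = {i, j}) → X j = 0)
    {s s'' : Fin k → Bool} (hs : ValidState G s) (hs'' : ValidState G s'')
    (hsi : s i = b) (hs''i : s'' i = b) (j : Fin k) :
    X j * ((if s j = true ∧ s'' j = false then (1 : ℝ) else 0) -
        (if s j = false ∧ s'' j = true then (1 : ℝ) else 0)) =
      pairLoss Cset θ i j s - pairLoss Cset θ i j s'' := by
  by_cases hC : ∃ l, Cset l = {i, j}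
  · cases h : s j <;> cases h'' : s'' j
    · simp [hθ.pairLoss_congr hs hs'' (hsi.trans hs''i.symm) (h.trans h''.symm)]
    · simp [eq_pairLoss_sub_of_cover hsize hθ hK hX hC hs hs'' hsi hs''i h h'']
    · simp [eq_pairLoss_sub_of_cover hsize hθ hK hX hC hs'' hs hs''i hsi h'' h]
    · simp [hθ.pairLoss_congr hs hs'' (hsi.trans hs''i.symm) (h.trans h''.symm)]
  · simp [hX0 j hC, pairLoss_eq_zero hC]

end
end

/-- with correlation sets of size at most 2 and `K` a cover of `C`, fixing
`i` and `b`, if `X j = μ_i^{s₂} − μ_i^{s₁}` for any `(i,j,b)`-pair `(s₁,s₂)` when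
`{i,j} ∈ C`, and `X j = 0` when `{i,j} ∉ C`, then for every valid state `s` with `s i = b`
and every `s'' ∈ K` with `s'' i = b`,
`μ_i^s = μ_i^{s''} + ∑_j X j · [1(s j = 1)·1(s'' j = 0) − 1(s j = 0)·1(s'' j = 1)]`. -/
theorem stmt_0 {k n : ℕ} (G : SimpleGraph (Fin k))
    (Cset : Fin n → Finset (Fin k)) (hsize : ∀ l, (Cset l).card ≤ 2)
    (θ : Fin n → (Fin k → Bool) → ℝ) (hθ : ParamAssignment G Cset θ)
    (K : Set (Fin k → Bool)) (hK : IsCover G Cset K)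
    (i : Fin k) (b : Bool) (X : Fin k → ℝ)
    (hX : ∀ (j : Fin k) (s₁ s₂ : Fin k → Bool), (∃ l : Fin n, Cset l = {i, j}) →
      IsPair G i j b s₁ s₂ → X j = meanLoss Cset θ i s₂ - meanLoss Cset θ i s₁)
    (hX0 : ∀ j : Fin k, (¬ ∃ l : Fin n, Cset l = {i, j}) → X j = 0)
    (s : Fin k → Bool) (hs : ValidState G s) (hsi : s i = b)
    (s'' : Fin k → Bool) (hs''K : s'' ∈ K) (hs''i : s'' i = b) :
    meanLoss Cset θ i s = meanLoss Cset θ i s'' +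
      ∑ j : Fin k, X j *
        ((if s j = true ∧ s'' j = false then (1 : ℝ) else 0) -
         (if s j = false ∧ s'' j = true then (1 : ℝ) else 0)) := by
  rw [← sub_eq_iff_eq_add', meanLoss_eq_sum_pairLoss hsize, meanLoss_eq_sum_pairLoss hsize,
    ← sum_sub_distrib]
  exact (sum_congr rfl fun j _ => mul_indicator_sub_eq_pairLoss_sub hsize hθ hK hX hX0 hs
    (hK.1 s'' hs''K) hsi hs''i j).symm
end

section
/- Let the correlation sets all have size at most 2, fix i,j ∈ {1,...,k} and b ∈ {0,1}, and suppose (s,s') and (t,t') are both (i,j,b)-pairs (so s(j)=t(j)=0, s'(j)=t'(j)=1, and each pair agrees on all coordinates other than j with the i-th coordinate equal to b). Then μ_i^{s'} − μ_i^s = μ_i^{t'} − μ_i^t; that is, the difference depends only on (i,j,b) and not on the chosen pair. Moreover, if {i,j} ∉ C then this difference is 0. -/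
open scoped BigOperators

/-!
Flipping coordinate `j` leaves every parameter `θ_l` with `j ∉ C_l` unchanged, so `μ_i^{s'} - μ_i^s`
is a sum over the correlation sets containing both `i` and `j`; as these have at most two
elements, they equal `{i, j}`. Their parameters depend only on the coordinates `i` and `j`, which
are `b, 0` before and `b, 1` after the flip for every `(i,j,b)`-pair.
-/

theorem Finset.eq_pair_iff_of_card_le_two {α : Type*} [DecidableEq α] {s : Finset α} {a b : α}
    (hs : s.card ≤ 2) (hab : a ≠ b) : s = {a, b} ↔ a ∈ s ∧ b ∈ s := by
  refine ⟨fun h => by simp [h], fun ⟨ha, hb⟩ => ?_⟩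
  refine (Finset.eq_of_subset_of_card_le (Finset.insert_subset ha (by simpa using hb)) ?_).symm
  rwa [Finset.card_pair hab]

section MeanLoss

variable {k n : ℕ} {G : SimpleGraph (Fin k)} {Cset : Fin n → Finset (Fin k)}
  {θ : Fin n → (Fin k → Bool) → ℝ}

theorem IsPair.ne {i j : Fin k} {b : Bool} {s s' : Fin k → Bool} (h : IsPair G i j b s s') :
    i ≠ j := by
  rintro rfl
  obtain ⟨-, -, -, hsi, hs'i, hsj, hs'j⟩ := h
  simp_all

theorem ParamAssignment.apply_eq_of_eq_pair (hθ : ParamAssignment G Cset θ) {l : Fin n}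
    {i j : Fin k} (hl : Cset l = {i, j}) {u v : Fin k → Bool} (hu : ValidState G u)
    (hv : ValidState G v) (hi : u i = v i) (hj : u j = v j) : θ l u = θ l v :=
  hθ.2 l u v hu hv fun x hx => by
    rcases Finset.mem_insert.1 (hl ▸ hx) with rfl | hx
    · exact hi
    · rwa [Finset.mem_singleton.1 hx]

theorem meanLoss_sub_eq_sum_of_agree_off (hθ : ParamAssignment G Cset θ) {i j : Fin k}
    {u u' : Fin k → Bool} (hu : ValidState G u) (hu' : ValidState G u')
    (hagree : ∀ l, l ≠ j → u l = u' l) :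
    meanLoss Cset θ i u' - meanLoss Cset θ i u =
      ∑ l with i ∈ Cset l ∧ j ∈ Cset l, (θ l u' - θ l u) := by
  rw [meanLoss, meanLoss, ← Finset.sum_sub_distrib, Finset.sum_filter]
  refine Finset.sum_congr rfl fun l _ => ?_
  by_cases hj : j ∈ Cset l
  · split_ifs <;> simp_all
  · have hθl : θ l u = θ l u' :=
      hθ.2 l u u' hu hu' fun x hx => hagree x (ne_of_mem_of_not_mem hx hj)
    simp [hj, hθl]

theorem IsPair.meanLoss_sub_eq_sum (hsize : ∀ l, (Cset l).card ≤ 2)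
    (hθ : ParamAssignment G Cset θ) {i j : Fin k} {b : Bool} {u u' : Fin k → Bool}
    (h : IsPair G i j b u u') :
    meanLoss Cset θ i u' - meanLoss Cset θ i u = ∑ l with Cset l = {i, j}, (θ l u' - θ l u) := by
  rw [meanLoss_sub_eq_sum_of_agree_off hθ h.1 h.2.1 h.2.2.1]
  congr 1
  exact Finset.filter_congr fun l _ => (Finset.eq_pair_iff_of_card_le_two (hsize l) h.ne).symm

end MeanLoss

/-- with correlation sets of size at most 2, if `(s,s')` and `(t,t')` are both
`(i,j,b)`-pairs, then `μ_i^{s'} − μ_i^s = μ_i^{t'} − μ_i^t`: the difference depends only on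
`(i,j,b)` and not on the chosen pair.  Moreover, if `{i,j} ∉ C` then this difference is `0`. -/
theorem stmt_1 {k n : ℕ} (G : SimpleGraph (Fin k))
    (Cset : Fin n → Finset (Fin k)) (hsize : ∀ l, (Cset l).card ≤ 2)
    (θ : Fin n → (Fin k → Bool) → ℝ) (hθ : ParamAssignment G Cset θ)
    (i j : Fin k) (b : Bool) (s s' t t' : Fin k → Bool)
    (hss' : IsPair G i j b s s') (htt' : IsPair G i j b t t') :
    meanLoss Cset θ i s' - meanLoss Cset θ i s =
      meanLoss Cset θ i t' - meanLoss Cset θ i t ∧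
    ((¬ ∃ l : Fin n, Cset l = {i, j}) →
      meanLoss Cset θ i s' - meanLoss Cset θ i s = 0) := by
  rw [hss'.meanLoss_sub_eq_sum hsize hθ, htt'.meanLoss_sub_eq_sum hsize hθ]
  obtain ⟨hs, hs', -, hsi, hs'i, hsj, hs'j⟩ := hss'
  obtain ⟨ht, ht', -, hti, ht'i, htj, ht'j⟩ := htt'
  refine ⟨Finset.sum_congr rfl fun l hl => ?_, fun hno => Finset.sum_eq_zero fun l hl => ?_⟩
  · have hl := (Finset.mem_filter.1 hl).2
    rw [hθ.apply_eq_of_eq_pair hl hs' ht' (hs'i.trans ht'i.symm) (hs'j.trans ht'j.symm),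
      hθ.apply_eq_of_eq_pair hl hs ht (hsi.trans hti.symm) (hsj.trans htj.symm)]
  · exact (hno ⟨l, (Finset.mem_filter.1 hl).2⟩).elim
end

section
/- If all correlation sets in C have size at most 2, then there exists a cover K of C with |K| ≤ 4n, where n = |C|: namely, one can take, for each {i,j} ∈ C, the at most four valid states whose coordinates are zero outside {i,j}, and for each singleton {i} ∈ C the all-zeros state and the indicator state of i. -/
open scoped BigOperators

/-!
For each correlation set `T`, take all valid states whose `true` coordinates lie in `T`: there
are at most `2 ^ #T ≤ 4` of them. For `{i, j}` and a dichotomy `(i, j, b)`, the state `b • eᵢ`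
and its update to `true` at `j` form an `(i, j, b)`-pair; the second is valid because for
`b = true` the dichotomy itself exhibits a valid state with `i` and `j` both `true`, so `i` and
`j` are not adjacent. For `{i}`, take `0` and `eᵢ`.
-/

open Finset Function

section

open scoped Classical

variable {k : ℕ} {G : SimpleGraph (Fin k)}

noncomputable def supportedStates (G : SimpleGraph (Fin k)) (T : Finset (Fin k)) :
    Finset (Fin k → Bool) :=
  (T.powerset.image fun U m => decide (m ∈ U)).filter (ValidState G)

theorem mem_supportedStates {T : Finset (Fin k)} {s : Fin k → Bool} :
    s ∈ supportedStates G T ↔ ValidState G s ∧ ∀ m, s m = true → m ∈ T := by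
  simp only [supportedStates, mem_filter, mem_image, mem_powerset]
  constructor
  · rintro ⟨⟨U, hUT, rfl⟩, hs⟩
    exact ⟨hs, fun m hm => hUT (of_decide_eq_true hm)⟩
  · rintro ⟨hs, hsT⟩
    refine ⟨⟨univ.filter (s · = true), fun m hm => hsT m (mem_filter.1 hm).2, ?_⟩, hs⟩
    funext m
    cases h : s m <;> simp [h]

theorem card_supportedStates_le (T : Finset (Fin k)) :
    #(supportedStates G T) ≤ 2 ^ #T :=
  calc #(supportedStates G T) ≤ #(T.powerset.image fun U m => decide (m ∈ U)) :=
        card_filter_le _ _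
    _ ≤ #T.powerset := card_image_le
    _ = 2 ^ #T := card_powerset T

theorem validState_of_support_subset_pair {i j : Fin k} {s : Fin k → Bool}
    (hs : ∀ m, s m = true → m = i ∨ m = j) (hij : s i = true → s j = true → ¬ G.Adj i j) :
    ValidState G s := by
  intro a c ha hc
  rcases hs a ha with rfl | rfl <;> rcases hs c hc with rfl | rfl
  · exact G.loopless.irrefl _
  · exact hij ha hc
  · exact fun h => hij hc ha h.symm
  · exact G.loopless.irrefl _

theorem IsDichotomy.not_adj {i j : Fin k} (h : IsDichotomy G i j true) : ¬ G.Adj i j := by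
  obtain ⟨-, s', -, hs', -, hs'j, -, hs'i⟩ := h
  exact hs' i j hs'i hs'j

theorem isPair_update {i j : Fin k} {b : Bool} {s : Fin k → Bool} (hij : i ≠ j)
    (hs : ValidState G s) (hs' : ValidState G (update s j true)) (hsi : s i = b)
    (hsj : s j = false) : IsPair G i j b s (update s j true) :=
  ⟨hs, hs', fun _ hl => (update_of_ne hl _ _).symm, hsi, by rwa [update_of_ne hij], hsj,
    update_self _ _ _⟩

noncomputable def supportedStatesCover {n : ℕ} (G : SimpleGraph (Fin k))
    (Cset : Fin n → Finset (Fin k)) :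
    Finset (Fin k → Bool) :=
  univ.biUnion fun l => supportedStates G (Cset l)

variable {n : ℕ} {Cset : Fin n → Finset (Fin k)}

theorem mem_supportedStatesCover {s : Fin k → Bool} :
    s ∈ supportedStatesCover G Cset ↔ ValidState G s ∧ ∃ l, ∀ m, s m = true → m ∈ Cset l := by
  simp only [supportedStatesCover, mem_biUnion, mem_univ, true_and, mem_supportedStates]
  exact ⟨fun ⟨l, hs, hl⟩ => ⟨hs, l, hl⟩, fun ⟨hs, l, hl⟩ => ⟨l, hs, hl⟩⟩

theorem card_supportedStatesCover_le (hsize : ∀ l, #(Cset l) ≤ 2) :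
    #(supportedStatesCover G Cset) ≤ 4 * n :=
  calc #(supportedStatesCover G Cset) ≤ #(univ : Finset (Fin n)) * 4 :=
        card_biUnion_le_card_mul _ _ _ fun l _ =>
          (card_supportedStates_le _).trans (pow_le_pow_right₀ one_le_two (hsize l))
    _ = 4 * n := by rw [card_univ, Fintype.card_fin, mul_comm]

theorem exists_isPair_mem_supportedStatesCover {i j : Fin k} (hij : i ≠ j)
    (hC : ∃ l, Cset l = {i, j}) {b : Bool} (hb : IsDichotomy G i j b) :
    ∃ s s', s ∈ supportedStatesCover G Cset ∧ s' ∈ supportedStatesCover G Cset ∧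
      IsPair G i j b s s' := by
  obtain ⟨l, hl⟩ := hC
  set s : Fin k → Bool := fun m => decide (m = i) && b
  have hsupp' : ∀ m, update s j true m = true → m = i ∨ m = j := by
    intro m hm
    by_cases hmj : m = j
    · exact Or.inr hmj
    · simp_all [s]
  have hsupp : ∀ m, s m = true → m = i := by simp [s]
  have hs : ValidState G s :=
    validState_of_support_subset_pair (fun m hm => .inl (hsupp m hm)) fun _ _ =>
      G.loopless.irrefl i
  have hs' : ValidState G (update s j true) := by
    refine validState_of_support_subset_pair hsupp' fun hi _ => ?_
    obtain rfl : b = true := by simpa [s, update_of_ne hij] using hi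
    exact hb.not_adj
  refine ⟨s, update s j true, ?_, ?_,
    isPair_update hij hs hs' (by simp [s]) (by simp [s, hij.symm])⟩
  · exact mem_supportedStatesCover.2 ⟨hs, l, fun m hm => by simp [hl, hsupp m hm]⟩
  · exact mem_supportedStatesCover.2 ⟨hs', l, by simpa [hl] using hsupp'⟩

theorem exists_flip_mem_supportedStatesCover {i : Fin k} (hC : ∃ l, Cset l = {i}) :
    ∃ s s', s ∈ supportedStatesCover G Cset ∧ s' ∈ supportedStatesCover G Cset ∧
      ValidState G s ∧ ValidState G s' ∧ s i = false ∧ s' i = true ∧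
      ∀ l : Fin k, l ≠ i → s l = s' l := by
  obtain ⟨l, hl⟩ := hC
  set s : Fin k → Bool := fun _ => false
  have hsupp : ∀ m, update s i true m = true → m = i := by
    intro m hm
    by_contra hmi
    simp [s, update_of_ne hmi] at hm
  have hs : ValidState G s := fun _ _ h => absurd h (by simp [s])
  have hs' : ValidState G (update s i true) :=
    validState_of_support_subset_pair (fun m hm => .inl (hsupp m hm)) fun _ _ =>
      G.loopless.irrefl i
  refine ⟨s, update s i true, mem_supportedStatesCover.2 ⟨hs, l, by simp [s]⟩,
    mem_supportedStatesCover.2 ⟨hs', l, fun m hm => by simp [hl, hsupp m hm]⟩, hs, hs', rfl,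
    update_self _ _ _, fun _ h => (update_of_ne h _ _).symm⟩

theorem isCover_supportedStatesCover :
    IsCover G Cset (supportedStatesCover G Cset : Set (Fin k → Bool)) :=
  ⟨fun _ hs => (mem_supportedStatesCover.1 hs).1,
    fun _ _ hij hC _ hb => exists_isPair_mem_supportedStatesCover hij hC hb,
    fun _ hC => exists_flip_mem_supportedStatesCover hC⟩

end

/-- if all correlation sets have size at most 2, then there exists a cover `K`
of `C` with `|K| ≤ 4n`, where `n = |C|`. -/
theorem stmt_2 {k n : ℕ} (G : SimpleGraph (Fin k))
    (Cset : Fin n → Finset (Fin k)) (hsize : ∀ l, (Cset l).card ≤ 2) :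
    ∃ K : Finset (Fin k → Bool), IsCover G Cset (↑K : Set (Fin k → Bool)) ∧
      K.card ≤ 4 * n :=
  ⟨supportedStatesCover G Cset, isCover_supportedStatesCover, card_supportedStatesCover_le hsize⟩
end

section
/- Let K be a general cover for C. Fix i ∈ {1,...,k} and b ∈ {0,1}, and for each J ∈ I_i and each pair of configurations (u₁,u₂) such that (i,b,J,u₁,u₂) is a dichotomy, define X^{i,u₁,u₂}_{b,J} = μ_i^{s₁} − μ_i^{s₂} where (s₁,s₂) is any (i,b,J,u₁,u₂)-pair in K; set X^{i,u,u}_{b,J} = 0. Then for every state s ∈ S with s(i) = b and every state s'' ∈ K with s''(i) = b, one has μ_i^s = μ_i^{s''} + Σ_{J ∈ I_i} X^{i, s(J), s''(J)}_{b,J}, where s(J) denotes s restricted to the coordinates in J. -/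
open scoped BigOperators

/-- `a` and `b` share a correlation set if some `C_l ∈ C` contains both. -/
def SharesSet {k n : ℕ} (Cset : Fin n → Finset (Fin k)) (a b : Fin k) : Prop :=
  ∃ l : Fin n, a ∈ Cset l ∧ b ∈ Cset l

/-- `Ii` is a partition of `{j ≠ i : j shares a correlation set with i}` into subsets such
that no two vertices lying in different subsets share a correlation set. -/
def IsPartitionFor {k n : ℕ} (Cset : Fin n → Finset (Fin k)) (i : Fin k)
    (Ii : Finset (Finset (Fin k))) : Prop :=
  (∀ J ∈ Ii, ∀ j ∈ J, j ≠ i ∧ SharesSet Cset i j) ∧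
  (∀ j : Fin k, j ≠ i → SharesSet Cset i j → ∃ J ∈ Ii, j ∈ J) ∧
  (∀ J ∈ Ii, ∀ J' ∈ Ii, J ≠ J' → Disjoint J J') ∧
  (∀ J ∈ Ii, ∀ J' ∈ Ii, J ≠ J' → ∀ a ∈ J, ∀ b ∈ J', ¬ SharesSet Cset a b)

/-- An `(i,b,J,u₁,u₂)`-pair: valid states `(s, s')` with `s` restricted to `J` equal to `u₁`,
`s'` restricted to `J` equal to `u₂`, `s i = s' i = b`, agreeing on all coordinates
outside `J`. -/
def IsGenPair {k : ℕ} (G : SimpleGraph (Fin k)) (i : Fin k) (b : Bool)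
    (J : Finset (Fin k)) (u₁ u₂ : Fin k → Bool) (s s' : Fin k → Bool) : Prop :=
  ValidState G s ∧ ValidState G s' ∧
    (∀ j ∈ J, s j = u₁ j) ∧ (∀ j ∈ J, s' j = u₂ j) ∧
    s i = b ∧ s' i = b ∧ (∀ l : Fin k, l ∉ J → s l = s' l)

/-- A general cover `K` of `C` relative to the partitions `I i`: a set of valid states
containing an `(i,b,J,u₁,u₂)`-pair for every valid dichotomy `(i,b,J,u₁,u₂)`. -/
def IsGenCover {k n : ℕ} (G : SimpleGraph (Fin k)) (Cset : Fin n → Finset (Fin k))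
    (I : Fin k → Finset (Finset (Fin k))) (K : Set (Fin k → Bool)) : Prop :=
  (∀ s ∈ K, ValidState G s) ∧
  (∀ (i : Fin k) (b : Bool) (J : Finset (Fin k)), J ∈ I i →
    ∀ u₁ u₂ : Fin k → Bool,
      (∃ s s' : Fin k → Bool, IsGenPair G i b J u₁ u₂ s s') →
      ∃ s s', s ∈ K ∧ s' ∈ K ∧ IsGenPair G i b J u₁ u₂ s s')

/-!
Every correlation set `C_j` containing `i` is either `{i}` itself or meets exactly one block
`J ∈ I_i`, and then lies inside `J ∪ {i}`. Splitting `μ_i` accordingly, the part coming from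
the sets `{i}` is the same at all states with the same value at `i`, and the part coming from
the block `J` depends only on the state's restriction to `J ∪ {i}`. An `(i,b,J,s,s'')`-pair
changes only the block `J`, so `X J s s''` is the difference of the `J`-parts at `s` and `s''`;
summing over the blocks gives `μ_i^s - μ_i^{s''}`.
-/

open Finset

variable {k n : ℕ}

namespace IsPartitionFor

variable {Cset : Fin n → Finset (Fin k)} {i : Fin k} {Ii : Finset (Finset (Fin k))}
  {J J' : Finset (Fin k)} {j : Fin n}

theorem not_mem (hI : IsPartitionFor Cset i Ii) (hJ : J ∈ Ii) : i ∉ J :=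
  fun h => (hI.1 J hJ i h).1 rfl

theorem eq_of_not_disjoint (hI : IsPartitionFor Cset i Ii) (hJ : J ∈ Ii) (hJ' : J' ∈ Ii)
    (hd : ¬Disjoint (Cset j) J) (hd' : ¬Disjoint (Cset j) J') : J = J' := by
  by_contra hne
  obtain ⟨a, haC, haJ⟩ := not_disjoint_iff.mp hd
  obtain ⟨a', haC', haJ'⟩ := not_disjoint_iff.mp hd'
  exact hI.2.2.2 J hJ J' hJ' hne a haJ a' haJ' ⟨j, haC, haC'⟩

theorem subset_insert (hI : IsPartitionFor Cset i Ii) (hJ : J ∈ Ii) (hij : i ∈ Cset j)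
    (hd : ¬Disjoint (Cset j) J) : Cset j ⊆ insert i J := by
  intro l hl
  by_cases hli : l = i
  · exact hli ▸ mem_insert_self i J
  obtain ⟨J', hJ', hlJ'⟩ := hI.2.1 l hli ⟨j, hij, hl⟩
  have hd' : ¬Disjoint (Cset j) J' := not_disjoint_iff.mpr ⟨l, hl, hlJ'⟩
  exact mem_insert_of_mem (hI.eq_of_not_disjoint hJ hJ' hd hd' ▸ hlJ')

theorem sum_ite_not_disjoint {M : Type*} [AddCommMonoid M] (hI : IsPartitionFor Cset i Ii)
    (hij : i ∈ Cset j) (hne : Cset j ≠ {i}) (c : M) :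
    ∑ J ∈ Ii, (if ¬Disjoint (Cset j) J then c else 0) = c := by
  obtain ⟨a, haC, hai⟩ : ∃ a ∈ Cset j, a ≠ i := by
    by_contra! h
    exact hne (eq_singleton_iff_unique_mem.mpr ⟨hij, h⟩)
  obtain ⟨J₀, hJ₀, haJ₀⟩ := hI.2.1 a hai ⟨j, hij, haC⟩
  have hd₀ : ¬Disjoint (Cset j) J₀ := not_disjoint_iff.mpr ⟨a, haC, haJ₀⟩
  rw [sum_eq_single_of_mem J₀ hJ₀ fun J hJ hne => if_neg fun hd =>
    hne (hI.eq_of_not_disjoint hJ hJ₀ hd hd₀), if_pos hd₀]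

end IsPartitionFor

section Decomposition

variable (Cset : Fin n → Finset (Fin k)) (θ : Fin n → (Fin k → Bool) → ℝ) (i : Fin k)

noncomputable def coreLoss (s : Fin k → Bool) : ℝ :=
  ∑ j : Fin n, if Cset j = {i} then θ j s else 0

noncomputable def blockLoss (J : Finset (Fin k)) (s : Fin k → Bool) : ℝ :=
  ∑ j : Fin n, if i ∈ Cset j ∧ ¬Disjoint (Cset j) J then θ j s else 0

variable {Cset i}

theorem meanLoss_eq_coreLoss_add_sum_blockLoss {Ii : Finset (Finset (Fin k))}
    (hI : IsPartitionFor Cset i Ii) (s : Fin k → Bool) :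
    meanLoss Cset θ i s = coreLoss Cset θ i s + ∑ J ∈ Ii, blockLoss Cset θ i J s := by
  simp only [meanLoss, coreLoss, blockLoss]
  rw [sum_comm, ← sum_add_distrib]
  refine sum_congr rfl fun j _ => ?_
  by_cases hij : i ∈ Cset j
  · by_cases hsingle : Cset j = {i}
    · have hdisj : ∀ J ∈ Ii, Disjoint (Cset j) J := fun J hJ => by
        simpa [hsingle] using hI.not_mem hJ
      rw [if_pos hij, if_pos hsingle,
        sum_eq_zero fun J hJ => if_neg fun h => h.2 (hdisj J hJ), add_zero]
    · simp only [hij, hsingle, true_and, if_true, if_false, zero_add]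
      exact (hI.sum_ite_not_disjoint hij hsingle _).symm
  · have hsingle : Cset j ≠ {i} := fun h => hij (h ▸ mem_singleton_self i)
    simp [hij, hsingle]

end Decomposition

variable {G : SimpleGraph (Fin k)} {Cset : Fin n → Finset (Fin k)}
  {θ : Fin n → (Fin k → Bool) → ℝ} {i : Fin k} {b : Bool} {Ii : Finset (Finset (Fin k))}
  {J : Finset (Fin k)} {s s' : Fin k → Bool}

theorem ValidState.mono {t : Fin k → Bool} (hs : ValidState G s)
    (hts : ∀ l, t l = true → s l = true) : ValidState G t :=
  fun p q hp hq => hs p q (hts p hp) (hts q hq)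

theorem exists_isGenPair (hs : ValidState G s) (hs' : ValidState G s') (hsi : s i = b)
    (hs'i : s' i = b) : ∃ t t', IsGenPair G i b J s s' t t' := by
  have hle : ∀ w : Fin k → Bool, ∀ l,
      (if l ∈ insert i J then w l else false) = true → w l = true := by
    intro w l h
    split_ifs at h
    exact h
  refine ⟨fun l => if l ∈ insert i J then s l else false,
    fun l => if l ∈ insert i J then s' l else false,
    hs.mono (hle s), hs'.mono (hle s'), fun j hj => by simp [hj], fun j hj => by simp [hj],
    by simpa using hsi, by simpa using hs'i, fun l hl => ?_⟩
  by_cases hli : l = i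
  · subst hli; simp [hsi, hs'i]
  · simp [hli, hl]

theorem coreLoss_eq_of_apply_eq (hθ : ParamAssignment G Cset θ) (hs : ValidState G s)
    (hs' : ValidState G s') (h : s i = s' i) : coreLoss Cset θ i s = coreLoss Cset θ i s' :=
  sum_congr rfl fun j _ => by
    split_ifs with hsingle
    · exact hθ.2 j s s' hs hs' fun l hl => by rw [hsingle, mem_singleton] at hl; rw [hl, h]
    · rfl

theorem meanLoss_sub_meanLoss_of_isGenPair {t t' : Fin k → Bool}
    (hθ : ParamAssignment G Cset θ) (hI : IsPartitionFor Cset i Ii) (hJ : J ∈ Ii)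
    (hs : ValidState G s) (hs' : ValidState G s') (hsi : s i = b) (hs'i : s' i = b)
    (hp : IsGenPair G i b J s s' t t') :
    meanLoss Cset θ i t - meanLoss Cset θ i t' =
      blockLoss Cset θ i J s - blockLoss Cset θ i J s' := by
  obtain ⟨ht, ht', htJ, ht'J, hti, ht'i, hout⟩ := hp
  simp only [meanLoss, blockLoss, ← sum_sub_distrib]
  refine sum_congr rfl fun j _ => ?_
  by_cases hij : i ∈ Cset j
  · by_cases hd : Disjoint (Cset j) J
    · have htt' : θ j t = θ j t' :=
        hθ.2 j t t' ht ht' fun l hl => hout l (disjoint_left.mp hd hl)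
      simp [hij, hd, htt']
    · have hsub := hI.subset_insert hJ hij hd
      have agree : ∀ u v : Fin k → Bool, ValidState G u → ValidState G v → u i = v i →
          (∀ l ∈ J, u l = v l) → θ j u = θ j v := fun u v hu hv hi hJ' =>
        hθ.2 j u v hu hv fun l hl => by
          rcases mem_insert.mp (hsub hl) with rfl | hlJ
          exacts [hi, hJ' l hlJ]
      rw [agree t s ht hs (hti.trans hsi.symm) htJ,
        agree t' s' ht' hs' (ht'i.trans hs'i.symm) ht'J]
      simp [hij, hd]
  · simp [hij]

theorem stmt_7_general {k n : ℕ} (G : SimpleGraph (Fin k))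
    (Cset : Fin n → Finset (Fin k))
    (θ : Fin n → (Fin k → Bool) → ℝ) (hθ : ParamAssignment G Cset θ)
    (I : Fin k → Finset (Finset (Fin k))) (hI : ∀ i, IsPartitionFor Cset i (I i))
    (K : Set (Fin k → Bool)) (hK : IsGenCover G Cset I K)
    (i : Fin k) (b : Bool)
    (X : Finset (Fin k) → (Fin k → Bool) → (Fin k → Bool) → ℝ)
    (hX : ∀ J ∈ I i, ∀ (u₁ u₂ s₁ s₂ : Fin k → Bool), s₁ ∈ K → s₂ ∈ K →
      IsGenPair G i b J u₁ u₂ s₁ s₂ →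
      X J u₁ u₂ = meanLoss Cset θ i s₁ - meanLoss Cset θ i s₂)
    (s : Fin k → Bool) (hs : ValidState G s) (hsi : s i = b)
    (s'' : Fin k → Bool) (hs''K : s'' ∈ K) (hs''i : s'' i = b) :
    meanLoss Cset θ i s = meanLoss Cset θ i s'' + ∑ J ∈ I i, X J s s'' := by
  have hs'' : ValidState G s'' := hK.1 s'' hs''K
  have hXJ : ∀ J ∈ I i, X J s s'' = blockLoss Cset θ i J s - blockLoss Cset θ i J s'' := by
    intro J hJ
    obtain ⟨t, t', ht, ht', hp⟩ :=
      hK.2 i b J hJ s s'' (exists_isGenPair hs hs'' hsi hs''i)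
    rw [hX J hJ s s'' t t' ht ht' hp,
      meanLoss_sub_meanLoss_of_isGenPair hθ (hI i) hJ hs hs'' hsi hs''i hp]
  rw [sum_congr rfl hXJ, sum_sub_distrib, meanLoss_eq_coreLoss_add_sum_blockLoss θ (hI i),
    meanLoss_eq_coreLoss_add_sum_blockLoss θ (hI i),
    coreLoss_eq_of_apply_eq hθ hs hs'' (hsi.trans hs''i.symm)]
  ring

/-- let `K` be a general cover of `C`.  Fix `i` and `b`, and let
`X J u₁ u₂ = μ_i^{s₁} − μ_i^{s₂}` for any `(i,b,J,u₁,u₂)`-pair `(s₁,s₂)` in `K`,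
with `X J u u = 0`.  Then for every valid state `s` with `s i = b` and every `s'' ∈ K`
with `s'' i = b`, `μ_i^s = μ_i^{s''} + ∑_{J ∈ I_i} X J (s|J) (s''|J)`. -/
theorem stmt_7 {k n : ℕ} (G : SimpleGraph (Fin k)) (m : ℕ)
    (Cset : Fin n → Finset (Fin k)) (hsize : ∀ l, (Cset l).card ≤ m)
    (θ : Fin n → (Fin k → Bool) → ℝ) (hθ : ParamAssignment G Cset θ)
    (I : Fin k → Finset (Finset (Fin k))) (hI : ∀ i, IsPartitionFor Cset i (I i))
    (K : Set (Fin k → Bool)) (hK : IsGenCover G Cset I K)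
    (i : Fin k) (b : Bool)
    (X : Finset (Fin k) → (Fin k → Bool) → (Fin k → Bool) → ℝ)
    (hX : ∀ J ∈ I i, ∀ (u₁ u₂ s₁ s₂ : Fin k → Bool), s₁ ∈ K → s₂ ∈ K →
      IsGenPair G i b J u₁ u₂ s₁ s₂ →
      X J u₁ u₂ = meanLoss Cset θ i s₁ - meanLoss Cset θ i s₂)
    (hXdiag : ∀ (J : Finset (Fin k)) (u₁ u₂ : Fin k → Bool),
      (∀ j ∈ J, u₁ j = u₂ j) → X J u₁ u₂ = 0)
    (s : Fin k → Bool) (hs : ValidState G s) (hsi : s i = b)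
    (s'' : Fin k → Bool) (hs''K : s'' ∈ K) (hs''i : s'' i = b) :
    meanLoss Cset θ i s = meanLoss Cset θ i s'' + ∑ J ∈ I i, X J s s'' :=
  stmt_7_general G Cset θ hθ I hI K hK i b X hX s hs hsi s'' hs''K hs''i
end

section
/- Fix i ∈ {1,...,k}, b ∈ {0,1}, J ∈ I_i and configurations u₁,u₂ ∈ {0,1}^J such that (i,b,J,u₁,u₂) is a dichotomy. If (s,s') and (t,t') are both (i,b,J,u₁,u₂)-pairs, then μ_i^{s} − μ_i^{s'} = μ_i^{t} − μ_i^{t'}; that is, the difference of mean losses of criterion i across such a pair depends only on (i,b,J,u₁,u₂) and not on the chosen pair of states. -/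
open scoped BigOperators

/-!
Split `μ_i` into the contributions of the correlation sets `C_l ∋ i`. If `C_l` misses `J`,
both states of a pair agree on `C_l`, so `θ_l` contributes nothing to either difference.
If `C_l` meets `J`, every other vertex of `C_l` shares `C_l` with `i` and with a vertex of `J`,
so it lies in the block `J`; thus `C_l ⊆ J ∪ {i}`, on which `s, t` (both `u₁` and `b`) and
`s', t'` (both `u₂` and `b`) agree, and the contributions of `θ_l` to the two differences coincide.
-/

lemma IsPartitionFor.subset_insert_s8 {k n : ℕ} {Cset : Fin n → Finset (Fin k)} {i : Fin k}
    {Ii : Finset (Finset (Fin k))} (hIi : IsPartitionFor Cset i Ii) {J : Finset (Fin k)}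
    (hJ : J ∈ Ii) {l : Fin n} {a : Fin k} (hil : i ∈ Cset l) (hal : a ∈ Cset l) (haJ : a ∈ J) :
    Cset l ⊆ insert i J := by
  intro x hx
  rcases eq_or_ne x i with rfl | hxi
  · exact Finset.mem_insert_self _ _
  obtain ⟨J', hJ', hxJ'⟩ := hIi.2.1 x hxi ⟨l, hil, hx⟩
  obtain rfl : J' = J := by
    by_contra hne
    exact hIi.2.2.2 J hJ J' hJ' (Ne.symm hne) a haJ x hxJ' ⟨l, hal, hx⟩
  exact Finset.mem_insert_of_mem hxJ'

namespace IsGenPair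

variable {k : ℕ} {G : SimpleGraph (Fin k)} {i : Fin k} {b : Bool} {J : Finset (Fin k)}
  {u₁ u₂ s s' t t' : Fin k → Bool}

lemma fst_eq_fst (hs : IsGenPair G i b J u₁ u₂ s s') (ht : IsGenPair G i b J u₁ u₂ t t') :
    ∀ x ∈ insert i J, s x = t x := by
  simp only [Finset.mem_insert, forall_eq_or_imp]
  exact ⟨hs.2.2.2.2.1.trans ht.2.2.2.2.1.symm,
    fun x hx => (hs.2.2.1 x hx).trans (ht.2.2.1 x hx).symm⟩

lemma snd_eq_snd (hs : IsGenPair G i b J u₁ u₂ s s') (ht : IsGenPair G i b J u₁ u₂ t t') :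
    ∀ x ∈ insert i J, s' x = t' x := by
  simp only [Finset.mem_insert, forall_eq_or_imp]
  exact ⟨hs.2.2.2.2.2.1.trans ht.2.2.2.2.2.1.symm,
    fun x hx => (hs.2.2.2.1 x hx).trans (ht.2.2.2.1 x hx).symm⟩

lemma param_eq_of_disjoint {n : ℕ} {Cset : Fin n → Finset (Fin k)}
    {θ : Fin n → (Fin k → Bool) → ℝ} (hθ : ParamAssignment G Cset θ)
    (hs : IsGenPair G i b J u₁ u₂ s s') {l : Fin n} (hl : Disjoint (Cset l) J) :
    θ l s = θ l s' :=
  hθ.2 l s s' hs.1 hs.2.1 fun x hx => hs.2.2.2.2.2.2 x (Finset.disjoint_left.1 hl hx)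

lemma param_sub_eq {n : ℕ} {Cset : Fin n → Finset (Fin k)} {θ : Fin n → (Fin k → Bool) → ℝ}
    (hθ : ParamAssignment G Cset θ) {Ii : Finset (Finset (Fin k))}
    (hIi : IsPartitionFor Cset i Ii) (hJ : J ∈ Ii)
    (hs : IsGenPair G i b J u₁ u₂ s s') (ht : IsGenPair G i b J u₁ u₂ t t')
    {l : Fin n} (hil : i ∈ Cset l) :
    θ l s - θ l s' = θ l t - θ l t' := by
  by_cases hl : Disjoint (Cset l) J
  · rw [hs.param_eq_of_disjoint hθ hl, ht.param_eq_of_disjoint hθ hl, sub_self, sub_self]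
  obtain ⟨a, hal, haJ⟩ := Finset.not_disjoint_iff.1 hl
  have hsub := hIi.subset_insert_s8 hJ hil hal haJ
  rw [hθ.2 l s t hs.1 ht.1 fun x hx => hs.fst_eq_fst ht x (hsub hx),
    hθ.2 l s' t' hs.2.1 ht.2.1 fun x hx => hs.snd_eq_snd ht x (hsub hx)]

end IsGenPair

theorem stmt_8_general {k n : ℕ} (G : SimpleGraph (Fin k))
    (Cset : Fin n → Finset (Fin k))
    (θ : Fin n → (Fin k → Bool) → ℝ) (hθ : ParamAssignment G Cset θ)
    (i : Fin k) (b : Bool) (Ii : Finset (Finset (Fin k)))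
    (hIi : IsPartitionFor Cset i Ii)
    (J : Finset (Fin k)) (hJ : J ∈ Ii) (u₁ u₂ : Fin k → Bool)
    (s s' t t' : Fin k → Bool)
    (hss' : IsGenPair G i b J u₁ u₂ s s')
    (htt' : IsGenPair G i b J u₁ u₂ t t') :
    meanLoss Cset θ i s - meanLoss Cset θ i s' =
      meanLoss Cset θ i t - meanLoss Cset θ i t' := by
  simp only [meanLoss, ← Finset.sum_sub_distrib]
  refine Finset.sum_congr rfl fun l _ => ?_
  split_ifs with hil
  · exact hss'.param_sub_eq hθ hIi hJ htt' hil
  · rfl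

/-- fix `i`, `b`, `J ∈ I_i` and configurations `u₁, u₂` such that
`(i,b,J,u₁,u₂)` is a dichotomy.  If `(s,s')` and `(t,t')` are both `(i,b,J,u₁,u₂)`-pairs,
then `μ_i^s − μ_i^{s'} = μ_i^t − μ_i^{t'}`: the difference depends only on
`(i,b,J,u₁,u₂)` and not on the chosen pair of states. -/
theorem stmt_8 {k n : ℕ} (G : SimpleGraph (Fin k)) (m : ℕ)
    (Cset : Fin n → Finset (Fin k)) (hsize : ∀ l, (Cset l).card ≤ m)
    (θ : Fin n → (Fin k → Bool) → ℝ) (hθ : ParamAssignment G Cset θ)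
    (i : Fin k) (b : Bool) (Ii : Finset (Finset (Fin k)))
    (hIi : IsPartitionFor Cset i Ii)
    (J : Finset (Fin k)) (hJ : J ∈ Ii) (u₁ u₂ : Fin k → Bool)
    (s s' t t' : Fin k → Bool)
    (hss' : IsGenPair G i b J u₁ u₂ s s')
    (htt' : IsGenPair G i b J u₁ u₂ t t') :
    meanLoss Cset θ i s - meanLoss Cset θ i s' =
      meanLoss Cset θ i t - meanLoss Cset θ i t' :=
  stmt_8_general G Cset θ hθ i b Ii hIi J hJ u₁ u₂ s s' t t' hss' htt'
end

section
/- In any run of the online algorithm ALG of Figure 3 on a complaint sequence of length T, the total amount by which barriers are reduced is bounded by the total barrier value created: Σ_{t=1}^T Σ_{i=1}^k Σ_{j∈N(i)} δ^t_{i→j} ≤ Σ_{i=1}^k f_i c_i. -/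
open scoped BigOperators Classical

/-- The result of fixing vertex `i` in configuration `s`: vertex `i` becomes fixed and all
its neighbors in `G` become unfixed. -/
noncomputable def fixStep {k : ℕ} (G : SimpleGraph (Fin k)) (s : Fin k → Bool) (i : Fin k) :
    Fin k → Bool :=
  fun l => if l = i then true else if G.Adj i l then false else s l

/-- A run of the online algorithm ALG of Figure 3 on the complaint sequence `seq`
(`seq t = (i_t, ℓ_t)`), with fixing costs `c`.  `s t` is the configuration before
processing complaint `t`, `tau` and `kap` the counters `τ` and `κ` before processing
complaint `t`, `δ t i j` the amount by which step (b), while processing the complaint at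
vertex `i` at time `t`, reduced `κ_j`, and `doesFix t` records whether the complained
vertex is fixed at step (c) of time `t`. -/
structure AlgRun {k : ℕ} (G : SimpleGraph (Fin k)) (c : Fin k → ℝ)
    (seq : ℕ → Fin k × ℝ) where
  s : ℕ → Fin k → Bool
  tau : ℕ → Fin k → ℝ
  kap : ℕ → Fin k → ℝ
  δ : ℕ → Fin k → Fin k → ℝ
  doesFix : ℕ → Bool
  h_s0 : ∀ i, s 0 i = false
  h_tau0 : ∀ i, tau 0 i = 0
  h_kap0 : ∀ i, kap 0 i = 0
  /-- barrier reductions are nonnegative -/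
  h_δ_nonneg : ∀ t i j, 0 ≤ δ t i j
  /-- only the complaint at the current unfixed vertex reduces barriers, and only those of
  its neighbors -/
  h_δ_supp : ∀ t i j, δ t i j ≠ 0 →
    i = (seq t).1 ∧ G.Adj i j ∧ s t i = false
  /-- a barrier is reduced by at most its current value -/
  h_δ_le : ∀ t j, G.Adj (seq t).1 j → δ t (seq t).1 j ≤ kap t j
  /-- the total reduction is at most the complaint loss -/
  h_δ_sum : ∀ t, s t (seq t).1 = false → (∑ j, δ t (seq t).1 j) ≤ (seq t).2
  /-- exit condition of the while loop of step (b): the loss is exhausted or all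
  neighboring barriers are zero -/
  h_exit : ∀ t, s t (seq t).1 = false →
    ((∑ j, δ t (seq t).1 j) = (seq t).2 ∨
      ∀ j, G.Adj (seq t).1 j → kap t j - δ t (seq t).1 j = 0)
  /-- step (c): the complained vertex is fixed iff `τ_i ≥ max(c_i, ∑_{j∈N(i)} κ_j)` -/
  h_fix_iff : ∀ t, s t (seq t).1 = false →
    (doesFix t = true ↔
      max (c (seq t).1)
        (∑ j, if G.Adj (seq t).1 j then kap t j - δ t (seq t).1 j else 0) ≤
        tau t (seq t).1 + (seq t).2)
  /-- a complaint at a fixed vertex changes nothing -/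
  h_fixed_step : ∀ t, s t (seq t).1 = true →
    doesFix t = false ∧ (∀ i, s (t + 1) i = s t i) ∧
      (∀ i, tau (t + 1) i = tau t i) ∧ (∀ i, kap (t + 1) i = kap t i)
  /-- state and counter updates when the complained vertex gets fixed -/
  h_step_fix : ∀ t, s t (seq t).1 = false → doesFix t = true →
    (∀ i, s (t + 1) i = fixStep G (s t) (seq t).1 i) ∧
      tau (t + 1) (seq t).1 = 0 ∧
      (∀ j, G.Adj (seq t).1 j → tau (t + 1) j = 0) ∧
      (∀ j, j ≠ (seq t).1 → ¬ G.Adj (seq t).1 j → tau (t + 1) j = tau t j) ∧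
      kap (t + 1) (seq t).1 = c (seq t).1 ∧
      (∀ j, j ≠ (seq t).1 → kap (t + 1) j = kap t j - δ t (seq t).1 j)
  /-- state and counter updates when the complained vertex is not fixed -/
  h_step_nofix : ∀ t, s t (seq t).1 = false → doesFix t = false →
    (∀ i, s (t + 1) i = s t i) ∧
      tau (t + 1) (seq t).1 = tau t (seq t).1 + (seq t).2 ∧
      (∀ j, j ≠ (seq t).1 → tau (t + 1) j = tau t j) ∧
      (∀ j, kap (t + 1) j = kap t j - δ t (seq t).1 j)

namespace AlgRun

variable {k : ℕ} {G : SimpleGraph (Fin k)} {c : Fin k → ℝ} {seq : ℕ → Fin k × ℝ}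

/-- Total loss of the online algorithm over the first `T` complaints: losses of complaints
arriving at unfixed vertices plus all fixing costs incurred. -/
noncomputable def loss (R : AlgRun G c seq) (T : ℕ) : ℝ :=
  ∑ t ∈ Finset.range T,
    ((if R.s t (seq t).1 = false then (seq t).2 else 0) +
      (if R.doesFix t then c (seq t).1 else 0))

/-- `f_i`: the number of times the run fixes vertex `i` during the first `T` steps. -/
noncomputable def fixCount (R : AlgRun G c seq) (T : ℕ) (i : Fin k) : ℕ :=
  ((Finset.range T).filter (fun t => R.doesFix t = true ∧ (seq t).1 = i)).card

/-- `δ^t_{i→i}`: the loss retained at vertex `i` at time `t`,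
`ℓ_t·1(i_t = i) − ∑_{j ∈ N(i)} δ^t_{i→j}`. -/
noncomputable def deltaSelf (R : AlgRun G c seq) (t : ℕ) (i : Fin k) : ℝ :=
  (if (seq t).1 = i then (seq t).2 else 0) - ∑ j, if G.Adj i j then R.δ t i j else 0

end AlgRun

/-- The state sequence of an offline algorithm that at each step `t`, after seeing
complaint `t`, either does nothing (`σ t = none`) or fixes the vertex `σ t`. -/
noncomputable def offStates {k : ℕ} (G : SimpleGraph (Fin k))
    (σ : ℕ → Option (Fin k)) : ℕ → Fin k → Bool
  | 0 => fun _ => false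
  | t + 1 =>
    match σ t with
    | none => offStates G σ t
    | some i => fixStep G (offStates G σ t) i

/-- Total loss of the offline algorithm `σ` over the first `T` complaints. -/
noncomputable def offLoss {k : ℕ} (G : SimpleGraph (Fin k)) (c : Fin k → ℝ)
    (seq : ℕ → Fin k × ℝ) (σ : ℕ → Option (Fin k)) (T : ℕ) : ℝ :=
  ∑ t ∈ Finset.range T,
    ((if offStates G σ t (seq t).1 = false then (seq t).2 else 0) +
      (match σ t with | none => 0 | some i => c i))

/-- The loss of the optimal offline algorithm OPT over the first `T` complaints. -/
noncomputable def optLoss {k : ℕ} (G : SimpleGraph (Fin k)) (c : Fin k → ℝ)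
    (seq : ℕ → Fin k × ℝ) (T : ℕ) : ℝ :=
  ⨅ σ : ℕ → Option (Fin k), offLoss G c seq σ T

/-!
Each barrier `κ_j` is a potential: a reduction `δ_{i→j}` lowers `κ_j` by the same amount, and
`κ_j` only grows when `v_j` is fixed, by at most `c_j` (it is reset to `c_j` from a nonnegative
value). Hence, per vertex `j`, the reductions of `κ_j` up to time `T` plus the final value of
`κ_j` are at most `f_j c_j`; summing over `j` and dropping `κ_j ≥ 0` gives the bound.
-/

namespace AlgRun

variable {k : ℕ} {G : SimpleGraph (Fin k)} {c : Fin k → ℝ} {seq : ℕ → Fin k × ℝ}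
  (R : AlgRun G c seq)

lemma δ_eq_zero {t : ℕ} {i j : Fin k} (h : ¬ (i = (seq t).1 ∧ G.Adj i j)) :
    R.δ t i j = 0 := by
  by_contra h0
  obtain ⟨hi, hij, -⟩ := R.h_δ_supp t i j h0
  exact h ⟨hi, hij⟩

lemma δ_eq_zero_of_fixed {t : ℕ} (hs : R.s t (seq t).1 = true) (j : Fin k) :
    R.δ t (seq t).1 j = 0 := by
  by_contra h0
  have := (R.h_δ_supp t _ j h0).2.2
  simp [hs] at this

lemma δ_le_kap {t : ℕ} {j : Fin k} (hkap : 0 ≤ R.kap t j) : R.δ t (seq t).1 j ≤ R.kap t j := by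
  by_cases hadj : G.Adj (seq t).1 j
  · exact R.h_δ_le t j hadj
  · rwa [R.δ_eq_zero fun h => hadj h.2]

lemma kap_succ (t : ℕ) (j : Fin k) :
    R.kap (t + 1) j =
      if R.doesFix t ∧ (seq t).1 = j then c j else R.kap t j - R.δ t (seq t).1 j := by
  cases hs : R.s t (seq t).1
  · cases hf : R.doesFix t
    · simpa using (R.h_step_nofix t hs hf).2.2.2 j
    · obtain ⟨-, -, -, -, hki, hkj⟩ := R.h_step_fix t hs hf
      by_cases hj : (seq t).1 = j
      · subst hj; simpa using hki
      · simpa [hj] using hkj j (Ne.symm hj)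
  · obtain ⟨hf, -, -, hk⟩ := R.h_fixed_step t hs
    simp [hf, hk, R.δ_eq_zero_of_fixed hs]

lemma kap_nonneg (hc : ∀ i, 0 ≤ c i) (t : ℕ) (j : Fin k) : 0 ≤ R.kap t j := by
  induction t generalizing j with
  | zero => rw [R.h_kap0]
  | succ t ih =>
    rw [R.kap_succ]
    split_ifs
    · exact hc j
    · exact sub_nonneg.mpr (R.δ_le_kap (ih j))

lemma kap_succ_add_δ_le (hc : ∀ i, 0 ≤ c i) (t : ℕ) (j : Fin k) :
    R.kap (t + 1) j + R.δ t (seq t).1 j ≤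
      R.kap t j + if R.doesFix t ∧ (seq t).1 = j then c j else 0 := by
  rw [R.kap_succ]
  split_ifs with h
  · -- a vertex is not its own neighbour, so fixing `v_j` does not reduce `κ_j`
    rw [R.δ_eq_zero fun h' => G.irrefl (h.2 ▸ h'.2)]
    linarith [R.kap_nonneg hc t j]
  · linarith

lemma fixCount_mul_eq_sum (T : ℕ) (j : Fin k) :
    (R.fixCount T j : ℝ) * c j =
      ∑ t ∈ Finset.range T, if R.doesFix t ∧ (seq t).1 = j then c j else 0 := by
  rw [fixCount, Finset.sum_ite, Finset.sum_const_zero, add_zero, Finset.sum_const,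
    nsmul_eq_mul]

lemma sum_δ_add_kap_le_fixCount_mul (hc : ∀ i, 0 ≤ c i) (T : ℕ) (j : Fin k) :
    ∑ t ∈ Finset.range T, R.δ t (seq t).1 j + R.kap T j ≤ R.fixCount T j * c j := by
  rw [R.fixCount_mul_eq_sum]
  induction T with
  | zero => simp [R.h_kap0]
  | succ T ih =>
    simp only [Finset.sum_range_succ]
    linarith [R.kap_succ_add_δ_le hc T j]

lemma sum_adj_δ_eq (t : ℕ) :
    ∑ i, ∑ j, (if G.Adj i j then R.δ t i j else 0) = ∑ j, R.δ t (seq t).1 j := by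
  rw [Finset.sum_eq_single (seq t).1]
  · refine Finset.sum_congr rfl fun j _ => ?_
    split_ifs with hadj
    · rfl
    · exact (R.δ_eq_zero fun h => hadj h.2).symm
  · intro i _ hi
    exact Finset.sum_eq_zero fun j _ => by
      split_ifs
      · exact R.δ_eq_zero fun h => hi h.1
      · rfl
  · simp

end AlgRun

theorem stmt_13_general {k : ℕ} (G : SimpleGraph (Fin k)) (c : Fin k → ℝ)
    (hc : ∀ i, 1 ≤ c i)
    (seq : ℕ → Fin k × ℝ)
    (T : ℕ) (R : AlgRun G c seq) :
    ∑ t ∈ Finset.range T, ∑ i, ∑ j, (if G.Adj i j then R.δ t i j else 0) ≤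
      ∑ i, (R.fixCount T i : ℝ) * c i := by
  have hc₀ : ∀ i, 0 ≤ c i := fun i => zero_le_one.trans (hc i)
  calc ∑ t ∈ Finset.range T, ∑ i, ∑ j, (if G.Adj i j then R.δ t i j else 0)
      = ∑ j, ∑ t ∈ Finset.range T, R.δ t (seq t).1 j := by
        simp only [R.sum_adj_δ_eq]
        exact Finset.sum_comm
    _ ≤ ∑ j, (∑ t ∈ Finset.range T, R.δ t (seq t).1 j + R.kap T j) :=
        Finset.sum_le_sum fun j _ => le_add_of_nonneg_right (R.kap_nonneg hc₀ T j)
    _ ≤ ∑ j, (R.fixCount T j : ℝ) * c j :=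
        Finset.sum_le_sum fun j _ => R.sum_δ_add_kap_le_fixCount_mul hc₀ T j

/-- in any run of ALG on a complaint sequence of length `T`, the total
amount by which barriers are reduced is bounded by the total barrier value created:
`∑_{t=1}^T ∑_i ∑_{j∈N(i)} δ^t_{i→j} ≤ ∑_i f_i c_i`. -/
theorem stmt_13 {k : ℕ} (G : SimpleGraph (Fin k)) (c : Fin k → ℝ)
    (hc : ∀ i, 1 ≤ c i) (B : ℝ)
    (seq : ℕ → Fin k × ℝ) (hseq : ∀ t, (seq t).2 ∈ Set.Icc (0 : ℝ) B)
    (T : ℕ) (R : AlgRun G c seq) :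
    ∑ t ∈ Finset.range T, ∑ i, ∑ j, (if G.Adj i j then R.δ t i j else 0) ≤
      ∑ i, (R.fixCount T i : ℝ) * c i :=
  stmt_13_general G c hc seq T R
end

section
/- Fix integers k ≥ 1 and T ≥ 2. Consider 2k counters τ_i^b (i ∈ {1,...,k}, b ∈ {0,1}), each initialized to a value in [1, T]. In each episode h = 1, 2, ..., an arbitrary vector s_h ∈ {0,1}^k is chosen and each of the k counters τ_i^{s_h(i)} is increased by t(h) = min_{i} τ_i^{s_h(i)} (the minimum taken over the values at the start of episode h). Then the number of episodes that can occur while the total elapsed time Σ_h t(h) remains at most T is bounded by 2k·(log₂ T + 2). -/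
/-!
Every counter starts at least 1 and never decreases, and in each episode the counter achieving
the minimum gains its own value, i.e. doubles. So a counter selected as the minimiser in `m`
episodes is at least `2 ^ m`; since no counter ever exceeds its initial value plus the total
elapsed time, i.e. `2T`, each of the `2k` counters is the minimiser in at most `log₂ T + 1`
episodes.
-/

open Finset Real

section Counters

variable {α : Type*} {τ : ℕ → α → ℝ} {t : ℕ → ℝ}

lemma one_le_counter (hstep : ∀ h a, τ (h + 1) a = τ h a ∨ τ (h + 1) a = τ h a + t h)
    (h0 : ∀ a, 1 ≤ τ 0 a) (hmin : ∀ h, ∃ a, t h = τ h a) (n : ℕ) (a : α) :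
    1 ≤ τ n a := by
  induction n generalizing a with
  | zero => exact h0 a
  | succ n ih =>
    obtain ⟨a₀, ha₀⟩ := hmin n
    rcases hstep n a with hsame | hinc
    · rw [hsame]; exact ih a
    · rw [hinc, ha₀]; linarith [ih a, ih a₀]

lemma counter_le_succ (hstep : ∀ h a, τ (h + 1) a = τ h a ∨ τ (h + 1) a = τ h a + t h)
    {h : ℕ} (ht : 0 ≤ t h) (a : α) : τ h a ≤ τ (h + 1) a := by
  rcases hstep h a with hsame | hinc
  · exact hsame.ge
  · rw [hinc]; linarith

lemma counter_le_add_sum (hstep : ∀ h a, τ (h + 1) a = τ h a ∨ τ (h + 1) a = τ h a + t h)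
    (ht : ∀ h, 0 ≤ t h) (n : ℕ) (a : α) : τ n a ≤ τ 0 a + ∑ h ∈ range n, t h := by
  induction n with
  | zero => simp
  | succ n ih =>
    rw [sum_range_succ]
    rcases hstep n a with hsame | hinc
    · rw [hsame]; linarith [ht n]
    · rw [hinc]; linarith

end Counters

lemma two_pow_card_filter_le {u : ℕ → ℝ} {P : ℕ → Prop} [DecidablePred P] (h0 : 1 ≤ u 0)
    (hmono : Monotone u) (hdouble : ∀ n, P n → u (n + 1) = 2 * u n) (n : ℕ) :
    (2 : ℝ) ^ #{h ∈ range n | P h} ≤ u n := by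
  induction n with
  | zero => simpa using h0
  | succ n ih =>
    rw [range_add_one, filter_insert]
    split_ifs with hP
    · rw [card_insert_of_notMem (by simp), pow_succ, hdouble n hP]
      linarith
    · exact ih.trans (hmono n.le_succ)

lemma natCast_le_logb_add_one_of_two_pow_le {m : ℕ} {x : ℝ} (hm : (2 : ℝ) ^ m ≤ 2 * x) :
    (m : ℝ) ≤ logb 2 x + 1 := by
  have hx : 0 < x := by linarith [pow_pos (two_pos : (0 : ℝ) < 2) m]
  have hpow : (2 : ℝ) ^ ((m : ℝ) - 1) ≤ x := by
    rw [rpow_sub two_pos, rpow_natCast, rpow_one]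
    linarith
  linarith [(le_logb_iff_rpow_le one_lt_two hx).2 hpow]

lemma natCast_card_le_card_mul_of_fiber_le {ι α : Type*} [Fintype α] [DecidableEq α]
    {s : Finset ι} (f : ι → α) {B : ℝ} (hB : ∀ a, (#{x ∈ s | f x = a} : ℝ) ≤ B) :
    (#s : ℝ) ≤ Fintype.card α * B := by
  rw [card_eq_sum_card_fiberwise (fun x _ => mem_univ (f x)), ← card_univ, Nat.cast_sum]
  calc ∑ a, (#{x ∈ s | f x = a} : ℝ) ≤ ∑ _a : α, B := sum_le_sum fun a _ => hB a
    _ = _ := by simp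

theorem stmt_18_general (k T : ℕ)
    (τ : ℕ → Fin k → Bool → ℝ) (s : ℕ → Fin k → Bool) (tmin : ℕ → ℝ)
    (hinit : ∀ (i : Fin k) (b : Bool), τ 0 i b ∈ Set.Icc (1 : ℝ) (T : ℝ))
    (htmin_mem : ∀ h : ℕ, ∃ i : Fin k, tmin h = τ h i (s h i))
    (hupd : ∀ (h : ℕ) (i : Fin k), τ (h + 1) i (s h i) = τ h i (s h i) + tmin h)
    (hupd' : ∀ (h : ℕ) (i : Fin k) (b : Bool), b ≠ s h i → τ (h + 1) i b = τ h i b)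
    (H : ℕ) (hsum : ∑ h ∈ Finset.range H, tmin h ≤ (T : ℝ)) :
    (H : ℝ) ≤ 2 * k * (Real.logb 2 T + 2) := by
  classical
  let c : ℕ → Fin k × Bool → ℝ := fun n p => τ n p.1 p.2
  have hstep : ∀ h p, c (h + 1) p = c h p ∨ c (h + 1) p = c h p + tmin h := by
    rintro h ⟨i, b⟩
    by_cases hb : b = s h i
    · subst hb; exact Or.inr (hupd h i)
    · exact Or.inl (hupd' h i b hb)
  choose g hg using htmin_mem
  let sel : ℕ → Fin k × Bool := fun h => (g h, s h (g h))
  have hc1 := one_le_counter hstep (fun p => (hinit p.1 p.2).1) fun h => ⟨sel h, hg h⟩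
  have ht : ∀ h, 0 ≤ tmin h := fun h => (hg h).symm ▸ zero_le_one.trans (hc1 h (sel h))
  have hfiber : ∀ p, (#{h ∈ range H | sel h = p} : ℝ) ≤ logb 2 T + 1 := fun p =>
    natCast_le_logb_add_one_of_two_pow_le <| calc
      _ ≤ c H p := two_pow_card_filter_le (hc1 0 p)
          (monotone_nat_of_le_succ fun n => counter_le_succ hstep (ht n) p)
          (fun n hn => by subst hn; simp only [c, sel]; rw [hupd, ← hg]; ring) H
      _ ≤ c 0 p + ∑ h ∈ range H, tmin h := counter_le_add_sum hstep ht H p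
      _ ≤ 2 * T := by linarith [(hinit p.1 p.2).2]
  calc (H : ℝ) = #(range H) := by rw [card_range]
    _ ≤ Fintype.card (Fin k × Bool) * (logb 2 T + 1) :=
      natCast_card_le_card_mul_of_fiber_le sel hfiber
    _ ≤ 2 * k * (logb 2 T + 2) := by
      rw [Fintype.card_prod, Fintype.card_fin, Fintype.card_bool]
      push_cast
      nlinarith [(Nat.cast_nonneg k : (0 : ℝ) ≤ k)]

/-- the episode-counting (doubling) argument.  There are `2k` counters
`τ_i^b`, each initialized to a value in `[1,T]`.  In episode `h` an arbitrary vector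
`s h ∈ {0,1}^k` is chosen and each of the `k` counters `τ_i^{s h i}` is increased by
`t(h) = min_i τ_i^{s h i}` (minimum over values at the start of episode `h`); the other
counters are unchanged.  Then the number of episodes that can occur while the total
elapsed time `∑_h t(h)` remains at most `T` is at most `2k(log₂ T + 2)`. -/
theorem stmt_18 (k T : ℕ) (hk : 1 ≤ k) (hT : 2 ≤ T)
    (τ : ℕ → Fin k → Bool → ℝ) (s : ℕ → Fin k → Bool) (tmin : ℕ → ℝ)
    (hinit : ∀ (i : Fin k) (b : Bool), τ 0 i b ∈ Set.Icc (1 : ℝ) (T : ℝ))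
    (htmin_le : ∀ (h : ℕ) (i : Fin k), tmin h ≤ τ h i (s h i))
    (htmin_mem : ∀ h : ℕ, ∃ i : Fin k, tmin h = τ h i (s h i))
    (hupd : ∀ (h : ℕ) (i : Fin k), τ (h + 1) i (s h i) = τ h i (s h i) + tmin h)
    (hupd' : ∀ (h : ℕ) (i : Fin k) (b : Bool), b ≠ s h i → τ (h + 1) i b = τ h i b)
    (H : ℕ) (hsum : ∑ h ∈ Finset.range H, tmin h ≤ (T : ℝ)) :
    (H : ℝ) ≤ 2 * k * (Real.logb 2 T + 2) :=
  stmt_18_general k T τ s tmin hinit htmin_mem hupd hupd' H hsum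
end
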